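/- Let h = ⟨O, po, rf⟩ be a history, let V ⊆ WR be nonempty. Then T[V] = 1 if and only if there exists v ∈ V such that the two coherence graphs G_loc[V\{v}, v] and G_mm[V\{v}, v] are acyclic and T[V\{v}] = 1, where T[U] = 1 iff some snapshot order tw[U] makes G_loc(tw[U]) and G_mm(tw[U]) acyclic. -/

import Mathlib

/-- A relation (graph) is acyclic if its transitive closure is irreflexive. -/
def Acyc {α : Type*} (R : Set (α × α)) : Prop :=
  ∀ a, ¬ Relation.TransGen (fun x y => (x, y) ∈ R) a a

/-- `t` is a strict total order on the set `S`. -/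
def StrictTotalOn {α : Type*} (S : Set α) (t : Set (α × α)) : Prop :=
  (∀ p ∈ t, p.1 ∈ S ∧ p.2 ∈ S) ∧
  (∀ a, (a, a) ∉ t) ∧
  (∀ a b c, (a, b) ∈ t → (b, c) ∈ t → (a, c) ∈ t) ∧
  (∀ a ∈ S, ∀ b ∈ S, a ≠ b → (a, b) ∈ t ∨ (b, a) ∈ t)

/-- Composition `rf⁻¹ ∘ S`: `(r,w)` iff there is `w'` with `(w',r) ∈ rf` and `(w',w) ∈ S`. -/
def compRF {α : Type*} (rf S : Set (α × α)) : Set (α × α) :=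
  {p | ∃ w', (w', p.1) ∈ rf ∧ (w', p.2) ∈ S}

/-- Restriction of a relation to pairs of events on variable `x`. -/
def restrVar {α X : Type*} (var : α → X) (S : Set (α × α)) (x : X) : Set (α × α) :=
  {p ∈ S | var p.1 = x ∧ var p.2 = x}

/-- Union over all variables of the restrictions: the same-variable part of `S`. -/
def sameVar {α X : Type*} (var : α → X) (S : Set (α × α)) : Set (α × α) :=
  ⋃ x : X, restrVar var S x

/-- `po-loc`: restriction of `po` to events on the same variable. -/
def poloc {α X : Type*} (var : α → X) (po : Set (α × α)) : Set (α × α) :=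
  {p ∈ po | var p.1 = var p.2}

/-- A store order: a union over variables of strict total orders on the writes to
that variable, with no edges between distinct variables. -/
def IsStoreOrder {α X : Type*} (var : α → X) (Wr : Set α) (ww : Set (α × α)) : Prop :=
  (∀ p ∈ ww, var p.1 = var p.2) ∧
  ∀ x : X, StrictTotalOn {w ∈ Wr | var w = x} (restrVar var ww x)

/-- `r[S]`: every write outside `S` (within `Wr`) precedes every write in `S`. -/
def rSet {α : Type*} (Wr S : Set α) : Set (α × α) :=
  {p | p.1 ∈ Wr \ S ∧ p.2 ∈ S}

/-- The table entry `T[V] = 1`: some snapshot order on `V` makes both graphs acyclic. -/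
def TableEntry {α X : Type*} (var : α → X) (Wr : Set α)
    (po rf pomm rfmm : Set (α × α)) (V : Set α) : Prop :=
  ∃ t : Set (α × α), StrictTotalOn V t ∧
    Acyc (poloc var po ∪ rf ∪ (t ∪ rSet Wr V) ∪ compRF rf (sameVar var (t ∪ rSet Wr V))) ∧
    Acyc (pomm ∪ rfmm ∪ (t ∪ rSet Wr V) ∪ compRF rf (sameVar var (t ∪ rSet Wr V)))

/-- `r[V',v]`: the complement of `V' ∪ {v}` precedes `V' ∪ {v}` and `v` is minimal. -/
def rVv {α : Type*} (Wr V' : Set α) (v : α) : Set (α × α) :=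
  rSet Wr (V' ∪ {v}) ∪ {p : α × α | p.1 = v ∧ p.2 ∈ V'}

/-!
A witness `t` for `T[V] = 1` has a minimum `v`; both `r[V \ {v}, v]` and `t` restricted to
`V \ {v}` (together with `r[V \ {v}]`) lie inside `tw[V]`, so acyclicity passes to the smaller
graphs. Conversely, putting `v` below a witness for `T[V \ {v}]` gives a snapshot order on `V`
each of whose edges either does not enter `v`, and then belongs to the graph for `V \ {v}`, or
does not enter `V \ {v}`, and then belongs to `G[V \ {v}, v]`. A cycle avoiding `v` lives in the
former graph; a cycle through `v`, cut at its last entry `b` into `V \ {v}`, yields a path from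
`b` to `v` in `G[V \ {v}, v]`, which the edge `(v, b)` of `r[V \ {v}, v]` closes.
-/

open Relation

section

variable {α X : Type*}

theorem Relation.TransGen.avoiding_or_lastEntry {r : α → α → Prop} (S : Set α) {x y : α}
    (h : TransGen r x y) :
    TransGen (fun a b => r a b ∧ b ∉ S) x y ∨
      ∃ b ∈ S, TransGen r x b ∧ ReflTransGen (fun a b => r a b ∧ b ∉ S) b y := by
  induction h with
  | @single y hxy =>
    by_cases hy : y ∈ S
    · exact .inr ⟨y, hy, .single hxy, .refl⟩
    · exact .inl (.single ⟨hxy, hy⟩)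
  | @tail b c hxb hbc ih =>
    by_cases hc : c ∈ S
    · exact .inr ⟨c, hc, hxb.tail hbc, .refl⟩
    · rcases ih with hxb' | ⟨d, hd, hxd, hdb⟩
      · exact .inl (hxb'.tail ⟨hbc, hc⟩)
      · exact .inr ⟨d, hd, hxd, hdb.tail ⟨hbc, hc⟩⟩

theorem Acyc.mono {R S : Set (α × α)} (h : R ⊆ S) (hS : Acyc S) : Acyc R :=
  fun a ha => hS a (TransGen.mono (fun _ _ hxy => h hxy) _ _ ha)

theorem acyc_of_split {H Gp Gv : Set (α × α)} {v : α} {V' : Set α}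
    (hp : ∀ p ∈ H, p.2 ≠ v → p ∈ Gp) (hv : ∀ p ∈ H, p.2 ∉ V' → p ∈ Gv)
    (hvV' : ∀ b ∈ V', (v, b) ∈ Gv) (hGp : Acyc Gp) (hGv : Acyc Gv) : Acyc H := by
  have hvv : ¬ TransGen (fun x y => (x, y) ∈ H) v v := by
    intro hcyc
    rcases hcyc.avoiding_or_lastEntry V' with hcyc' | ⟨b, hb, -, hbv⟩
    · exact hGv v (TransGen.mono (fun _ _ h => hv _ h.1 h.2) _ _ hcyc')
    · exact hGv v (.head' (hvV' b hb) (ReflTransGen.mono (fun _ _ h => hv _ h.1 h.2) _ _ hbv))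
  intro a hcyc
  rcases hcyc.avoiding_or_lastEntry {v} with hcyc' | ⟨_, rfl, hav, hva⟩
  · exact hGp a (TransGen.mono (fun _ _ h => hp _ h.1 h.2) _ _ hcyc')
  · exact hvv (TransGen.trans_right (ReflTransGen.mono (fun _ _ h => h.1) _ _ hva) hav)

section Coherence

variable (var : α → X) (rf : Set (α × α))

/-- `B` is `po-loc ∪ rf` or `po-mm ∪ rf-mm`, and `S` is `tw[U]` or `r[V', v]`. -/
def coherenceGraph (B S : Set (α × α)) : Set (α × α) :=
  B ∪ S ∪ compRF rf (sameVar var S)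

variable {var rf}

theorem mem_sameVar {S : Set (α × α)} {p : α × α} :
    p ∈ sameVar var S ↔ p ∈ S ∧ var p.1 = var p.2 := by
  simp only [sameVar, restrVar, Set.mem_iUnion, Set.mem_ofPred_eq]
  exact ⟨fun ⟨_, hS, h1, h2⟩ => ⟨hS, h1.trans h2.symm⟩, fun ⟨hS, h⟩ => ⟨_, hS, rfl, h.symm⟩⟩

/-- An edge of `rf⁻¹ ∘ S` has the same target as the `S`-edge it comes from. -/
theorem mem_coherenceGraph_of_snd {B S A : Set (α × α)} {P : α → Prop}
    (h : ∀ p ∈ S, P p.2 → p ∈ A) :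
    ∀ p ∈ coherenceGraph var rf B S, P p.2 → p ∈ coherenceGraph var rf B A := by
  rintro p ((hB | hS) | ⟨w, hw, hwp⟩) hP
  · exact .inl (.inl hB)
  · exact .inl (.inr (h p hS hP))
  · rw [mem_sameVar] at hwp
    exact .inr ⟨w, hw, mem_sameVar.2 ⟨h _ hwp.1 hP, hwp.2⟩⟩

theorem coherenceGraph_mono {B S A : Set (α × α)} (h : S ⊆ A) :
    coherenceGraph var rf B S ⊆ coherenceGraph var rf B A :=
  fun p hp => mem_coherenceGraph_of_snd (P := fun _ => True) (fun _ hq _ => h hq) p hp trivial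

theorem acyc_coherenceGraph_of_split {B S Sp Sv : Set (α × α)} {v : α} {V' : Set α}
    (hp : ∀ p ∈ S, p.2 ≠ v → p ∈ Sp) (hv : ∀ p ∈ S, p.2 ∉ V' → p ∈ Sv)
    (hvV' : ∀ b ∈ V', (v, b) ∈ Sv) (hGp : Acyc (coherenceGraph var rf B Sp))
    (hGv : Acyc (coherenceGraph var rf B Sv)) : Acyc (coherenceGraph var rf B S) :=
  acyc_of_split (mem_coherenceGraph_of_snd (P := (· ≠ v)) hp)
    (mem_coherenceGraph_of_snd (P := (· ∉ V')) hv)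
    (fun b hb => .inl (.inr (hvV' b hb))) hGp hGv

end Coherence

section Snapshot

variable {Wr S : Set α} {t : Set (α × α)} {v : α}

theorem StrictTotalOn.exists_min [Finite α] (ht : StrictTotalOn S t) (hS : S.Nonempty) :
    ∃ v ∈ S, ∀ u ∈ S, u ≠ v → (v, u) ∈ t := by
  obtain ⟨-, hirr, htrans, htotal⟩ := ht
  let r : α → α → Prop := fun a b => (a, b) ∈ t
  have : IsTrans α r := ⟨htrans⟩
  have : Std.Irrefl r := ⟨hirr⟩
  obtain ⟨v, hv, hmin⟩ := (Finite.wellFounded_of_trans_of_irrefl r).has_min S hS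
  exact ⟨v, hv, fun u hu huv => (htotal v hv u hu huv.symm).resolve_right (hmin u hu)⟩

theorem StrictTotalOn.restrict (ht : StrictTotalOn S t) (v : α) :
    StrictTotalOn (S \ {v}) {p ∈ t | p.1 ≠ v ∧ p.2 ≠ v} := by
  obtain ⟨hmem, hirr, htrans, htotal⟩ := ht
  refine ⟨fun p ⟨hp, h1, h2⟩ => ⟨⟨(hmem p hp).1, h1⟩, ⟨(hmem p hp).2, h2⟩⟩,
    fun a h => hirr a h.1, fun a b c hab hbc => ⟨htrans a b c hab.1 hbc.1, hab.2.1, hbc.2.2⟩, ?_⟩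
  intro a ha b hb hab
  exact (htotal a ha.1 b hb.1 hab).imp (fun h => ⟨h, ha.2, hb.2⟩) (fun h => ⟨h, hb.2, ha.2⟩)

theorem StrictTotalOn.insert_min (ht : StrictTotalOn (S \ {v}) t) (hv : v ∈ S) :
    StrictTotalOn S (t ∪ {v} ×ˢ (S \ {v})) := by
  obtain ⟨hmem, hirr, htrans, htotal⟩ := ht
  refine ⟨?_, ?_, ?_, ?_⟩
  · rintro ⟨a, b⟩ (h | ⟨rfl, hb⟩)
    exacts [⟨(hmem _ h).1.1, (hmem _ h).2.1⟩, ⟨hv, hb.1⟩]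
  · rintro a (h | ⟨rfl, h⟩)
    exacts [hirr a h, h.2 rfl]
  · rintro a b c (hab | ⟨ha, hab⟩) (hbc | ⟨hb, -⟩)
    · exact .inl (htrans a b c hab hbc)
    · exact absurd hb (hmem _ hab).2.2
    · exact .inr ⟨ha, (hmem _ hbc).2⟩
    · exact absurd hb hab.2
  · intro a ha b hb hab
    by_cases hav : a = v
    · subst hav
      exact .inl (.inr ⟨rfl, hb, Ne.symm hab⟩)
    by_cases hbv : b = v
    · subst hbv
      exact .inr (.inr ⟨rfl, ha, hab⟩)
    exact (htotal a ⟨ha, hav⟩ b ⟨hb, hbv⟩ hab).imp .inl .inl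

theorem rSet_diff_singleton_subset (hmin : ∀ u ∈ S, u ≠ v → (v, u) ∈ t) :
    rSet Wr (S \ {v}) ⊆ t ∪ rSet Wr S := by
  rintro ⟨a, b⟩ ⟨⟨haW, ha⟩, hb⟩
  by_cases hav : a = v
  · subst hav
    exact .inl (hmin b hb.1 hb.2)
  · exact .inr ⟨⟨haW, fun haS => ha ⟨haS, hav⟩⟩, hb.1⟩

theorem rVv_diff_singleton_subset (hvS : v ∈ S) (hmin : ∀ u ∈ S, u ≠ v → (v, u) ∈ t) :
    rVv Wr (S \ {v}) v ⊆ t ∪ rSet Wr S := by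
  rw [rVv, Set.sdiff_union_of_subset (Set.singleton_subset_iff.2 hvS)]
  rintro ⟨a, b⟩ (h | ⟨rfl, hb⟩)
  exacts [.inr h, .inl (hmin b hb.1 hb.2)]

theorem mem_union_rSet_diff_singleton_of_snd_ne (hvW : v ∈ Wr) :
    ∀ p ∈ t ∪ {v} ×ˢ (S \ {v}) ∪ rSet Wr S, p.2 ≠ v → p ∈ t ∪ rSet Wr (S \ {v}) := by
  rintro ⟨a, b⟩ ((h | ⟨rfl, hb⟩) | ⟨⟨haW, haS⟩, hbS⟩) hbv
  · exact .inl h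
  · exact .inr ⟨⟨hvW, fun h => h.2 rfl⟩, hb⟩
  · exact .inr ⟨⟨haW, fun h => haS h.1⟩, hbS, hbv⟩

theorem mem_rVv_of_snd_notMem (hvS : v ∈ S) (ht : ∀ p ∈ t, p.2 ∈ S \ {v}) :
    ∀ p ∈ t ∪ {v} ×ˢ (S \ {v}) ∪ rSet Wr S, p.2 ∉ S \ {v} → p ∈ rVv Wr (S \ {v}) v := by
  rw [rVv, Set.sdiff_union_of_subset (Set.singleton_subset_iff.2 hvS)]
  rintro p ((h | h) | h) hp
  exacts [absurd (ht p h) hp, .inr h, .inl h]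

end Snapshot

end

theorem table_recursion_general {α X : Type*} [Fintype α]
    (var : α → X) (Wr : Set α) (po rf pomm rfmm : Set (α × α))
    (V : Set α) (hV : V ⊆ Wr) (hne : V.Nonempty) :
    TableEntry var Wr po rf pomm rfmm V ↔
    ∃ v ∈ V,
      Acyc (poloc var po ∪ rf ∪ rVv Wr (V \ {v}) v ∪
        compRF rf (sameVar var (rVv Wr (V \ {v}) v))) ∧
      Acyc (pomm ∪ rfmm ∪ rVv Wr (V \ {v}) v ∪
        compRF rf (sameVar var (rVv Wr (V \ {v}) v))) ∧
      TableEntry var Wr po rf pomm rfmm (V \ {v}) := by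
  constructor
  · rintro ⟨t, ht, hloc, hmm⟩
    obtain ⟨v, hv, hmin⟩ := ht.exists_min hne
    have hG : rVv Wr (V \ {v}) v ⊆ t ∪ rSet Wr V := rVv_diff_singleton_subset hv hmin
    have hT : {p ∈ t | p.1 ≠ v ∧ p.2 ≠ v} ∪ rSet Wr (V \ {v}) ⊆ t ∪ rSet Wr V :=
      Set.union_subset ((Set.sep_subset _ _).trans Set.subset_union_left)
        (rSet_diff_singleton_subset hmin)
    exact ⟨v, hv, hloc.mono (coherenceGraph_mono hG), hmm.mono (coherenceGraph_mono hG), _,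
      ht.restrict v, hloc.mono (coherenceGraph_mono hT), hmm.mono (coherenceGraph_mono hT)⟩
  · rintro ⟨v, hv, hloc, hmm, t, ht, hloc', hmm'⟩
    have hnotv := mem_union_rSet_diff_singleton_of_snd_ne (t := t) (S := V) (hV hv)
    have hnotV' := mem_rVv_of_snd_notMem (Wr := Wr) hv fun p hp => (ht.1 p hp).2
    have hvV : ∀ b ∈ V \ {v}, (v, b) ∈ rVv Wr (V \ {v}) v := fun b hb => .inr ⟨rfl, hb⟩
    exact ⟨_, ht.insert_min hv, acyc_coherenceGraph_of_split hnotv hnotV' hvV hloc' hloc,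
      acyc_coherenceGraph_of_split hnotv hnotV' hvV hmm' hmm⟩

theorem table_recursion {α X : Type*} [Fintype α]
    (var : α → X) (Wr : Set α) (po rf pomm rfmm : Set (α × α))
    (hpo_irr : ∀ a, (a, a) ∉ po)
    (hpo_trans : ∀ a b c, (a, b) ∈ po → (b, c) ∈ po → (a, c) ∈ po)
    (hrf : ∀ p ∈ rf, p.1 ∈ Wr ∧ p.2 ∉ Wr ∧ var p.1 = var p.2)
    (hrf_uniq : ∀ r ∉ Wr, ∃! w, (w, r) ∈ rf)
    (hpomm : pomm ⊆ po) (hrfmm : rfmm ⊆ rf)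
    (V : Set α) (hV : V ⊆ Wr) (hne : V.Nonempty) :
    TableEntry var Wr po rf pomm rfmm V ↔
    ∃ v ∈ V,
      Acyc (poloc var po ∪ rf ∪ rVv Wr (V \ {v}) v ∪
        compRF rf (sameVar var (rVv Wr (V \ {v}) v))) ∧
      Acyc (pomm ∪ rfmm ∪ rVv Wr (V \ {v}) v ∪
        compRF rf (sameVar var (rVv Wr (V \ {v}) v))) ∧
      TableEntry var Wr po rf pomm rfmm (V \ {v}) :=
  table_recursion_general var Wr po rf pomm rfmm V hV hne
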